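/- In ℤ^{1,9+2n}, the class K + Σ (the classes listed in Equation (6) of the paper), namely K + (n-2)(F-2e₁₁-e₁₃) + (n-2)(F-2e₁₀-e₁₂) + (n-2)(e₁₅-e₁₃) + (n-2)(e₁₄-e₁₂) + (n-3)(e₁₇-e₁₅) + (n-3)(e₁₆-e₁₄) + ⋯ + (e_{9+2n}-e_{7+2n}) + (e_{8+2n}-e_{6+2n}), is divisible by (2n-3) in the lattice, where K = 3h - Σ_{i=1}^{9+2n} eᵢ and F = 3h - Σ_{i=1}^{9} eᵢ. -/
import Mathlib


/-- The basis vector `e_m` of `ℤ^{1,k}` (for `1 ≤ m ≤ k`); a lattice vector is a pair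
`(a, v)` standing for `a·h + ∑ᵢ v i · e_{i+1}`. -/
def ee (k m : ℕ) : ℤ × (Fin k → ℤ) :=
  (0, fun i => if (i : ℕ) + 1 = m then 1 else 0)

/-- The hyperplane class `h` of `ℤ^{1,k}`. -/
def hh (k : ℕ) : ℤ × (Fin k → ℤ) := (1, 0)

lemma abel {M : Type*} [AddCommGroup M] (f : ℕ → M) (m : ℕ) :
    ∑ j ∈ Finset.range m, ((m : ℤ) - j) • (f (j + 1) - f j)
      = (∑ j ∈ Finset.Icc 1 m, f j) - (m : ℤ) • f 0 := by
  induction m with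
  | zero => simp
  | succ m ih =>
    have step : ∀ j ∈ Finset.range (m + 1),
        (((m + 1 : ℕ) : ℤ) - j) • (f (j + 1) - f j)
          = ((m : ℤ) - j) • (f (j + 1) - f j) + (f (j + 1) - f j) := by
      intro j _
      have : ((m + 1 : ℕ) : ℤ) - j = ((m : ℤ) - j) + 1 := by push_cast; ring
      rw [this, add_smul, one_smul]
    rw [Finset.sum_congr rfl step, Finset.sum_add_distrib,
      Finset.sum_range_succ (fun j => ((m : ℤ) - (j : ℤ)) • (f (j + 1) - f j)),
      sub_self, zero_smul, add_zero, ih, Finset.sum_range_sub f,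
      Finset.sum_Icc_succ_top (by omega : 1 ≤ m + 1)]
    push_cast
    module

lemma ind (m t : ℕ) :
    (∑ j ∈ Finset.Icc 1 m, (if t = 13 + 2 * j then (1 : ℤ) else 0))
      + (∑ j ∈ Finset.Icc 1 m, (if t = 12 + 2 * j then (1 : ℤ) else 0))
      = if 14 ≤ t ∧ t ≤ 13 + 2 * m then 1 else 0 := by
  induction m with
  | zero =>
    have h : ¬(14 ≤ t ∧ t ≤ 13 + 2 * 0) := by omega
    simp [h]
  | succ m ih =>
    rw [Finset.sum_Icc_succ_top (by omega : 1 ≤ m + 1),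
      Finset.sum_Icc_succ_top (by omega : 1 ≤ m + 1), add_add_add_comm, ih]
    split_ifs <;> omega


/-- In `ℤ^{1,9+2n}`, the class
`K + (n-2)(F-2e₁₁-e₁₃) + (n-2)(F-2e₁₀-e₁₂) + (n-2)(e₁₅-e₁₃) + (n-2)(e₁₄-e₁₂)
 + (n-3)(e₁₇-e₁₅) + (n-3)(e₁₆-e₁₄) + ⋯ + (e_{9+2n}-e_{7+2n}) + (e_{8+2n}-e_{6+2n})`
is divisible by `2n-3`, where `K = 3h - Σ_{i=1}^{9+2n} eᵢ` and `F = 3h - Σ_{i=1}^{9} eᵢ`. -/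
theorem stmt9 (n : ℕ) (hn : 2 ≤ n) :
    let k := 9 + 2 * n
    let K : ℤ × (Fin k → ℤ) := (3, fun _ => -1)
    let F : ℤ × (Fin k → ℤ) := (3 : ℤ) • hh k - ∑ i ∈ Finset.Icc 1 9, ee k i
    let Cl : ℤ × (Fin k → ℤ) :=
      K + ((n : ℤ) - 2) • (F - (2 : ℤ) • ee k 11 - ee k 13)
        + ((n : ℤ) - 2) • (F - (2 : ℤ) • ee k 10 - ee k 12)
        + ∑ j ∈ Finset.range (n - 2), ((n : ℤ) - 2 - j) • (ee k (15 + 2 * j) - ee k (13 + 2 * j))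
        + ∑ j ∈ Finset.range (n - 2), ((n : ℤ) - 2 - j) • (ee k (14 + 2 * j) - ee k (12 + 2 * j))
    ∃ w : ℤ × (Fin k → ℤ), Cl = (2 * (n : ℤ) - 3) • w := by
  intro k K F Cl
  have hmc : (((n - 2 : ℕ) : ℤ)) = (n : ℤ) - 2 := by omega
  have hs1 : (∑ j ∈ Finset.range (n - 2),
        ((n : ℤ) - 2 - j) • (ee k (15 + 2 * j) - ee k (13 + 2 * j)))
      = (∑ j ∈ Finset.Icc 1 (n - 2), ee k (13 + 2 * j)) - ((n : ℤ) - 2) • ee k 13 := by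
    rw [← hmc, ← abel (fun j => ee k (13 + 2 * j)) (n - 2)]
    apply Finset.sum_congr rfl
    intro j _
    simp only [hmc, show 13 + 2 * (j + 1) = 15 + 2 * j from by omega]
  have hs2 : (∑ j ∈ Finset.range (n - 2),
        ((n : ℤ) - 2 - j) • (ee k (14 + 2 * j) - ee k (12 + 2 * j)))
      = (∑ j ∈ Finset.Icc 1 (n - 2), ee k (12 + 2 * j)) - ((n : ℤ) - 2) • ee k 12 := by
    rw [← hmc, ← abel (fun j => ee k (12 + 2 * j)) (n - 2)]
    apply Finset.sum_congr rfl
    intro j _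
    simp only [hmc, show 12 + 2 * (j + 1) = 14 + 2 * j from by omega]
  refine ⟨(3, fun i => if (i : ℕ) < 13 then -1 else 0), ?_⟩
  show K + _ + _ + _ + _ = _
  rw [hs1, hs2]
  refine Prod.ext ?_ (funext fun i => ?_)
  · simp only [K, F, ee, hh, Prod.fst_add, Prod.fst_sub, Prod.smul_fst, Prod.fst_sum,
      Finset.sum_const, smul_eq_mul, mul_zero, mul_one, smul_zero, Prod.mk.injEq]
    push_cast
    ring
  · have hi : (i : ℕ) < 9 + 2 * n := i.isLt
    simp only [K, F, ee, hh, Prod.snd_add, Prod.snd_sub, Prod.smul_snd, Prod.snd_sum,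
      Pi.add_apply, Pi.sub_apply, Pi.smul_apply, Finset.sum_apply, smul_eq_mul,
      Pi.zero_apply, mul_zero]
    rw [Finset.sum_ite_eq (Finset.Icc 1 9) ((i : ℕ) + 1) (fun _ => (1 : ℤ))]
    have key := ind (n - 2) ((i : ℕ) + 1)
    have h1 : 13 + 2 * (n - 2) = 9 + 2 * n := by omega
    rw [h1] at key
    rw [show (∑ j ∈ Finset.Icc 1 (n - 2), if (i : ℕ) + 1 = 13 + 2 * j then (1:ℤ) else 0)
        = (if 14 ≤ (i : ℕ) + 1 ∧ (i : ℕ) + 1 ≤ 9 + 2 * n then 1 else 0)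
          - (∑ j ∈ Finset.Icc 1 (n - 2), if (i : ℕ) + 1 = 12 + 2 * j then (1:ℤ) else 0) from
      by linarith [key]]
    rcases Nat.lt_or_ge (i : ℕ) 13 with hc | hc
    · interval_cases hv : (i : ℕ) <;> norm_num <;> ring
    · have A : ¬((i : ℕ) + 1 ∈ Finset.Icc 1 9) := by rw [Finset.mem_Icc]; omega
      have B : ((14 : ℕ) ≤ (i : ℕ) + 1 ∧ (i : ℕ) + 1 ≤ 9 + 2 * n) := by omega
      simp only [if_neg A, if_pos B, if_neg (show ¬((i : ℕ) + 1 = 11) by omega),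
        if_neg (show ¬((i : ℕ) + 1 = 13) by omega), if_neg (show ¬((i : ℕ) + 1 = 10) by omega),
        if_neg (show ¬((i : ℕ) + 1 = 12) by omega), if_neg (show ¬((i : ℕ) < 13) by omega)]
      ring
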